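/- arXiv:2605.15500 — 4 statements merged into one kernel-verified Lean document; each statement's English description precedes it below -/
import Mathlib

section
/- For all n ≥ 0, a(n) = ∑_{k=0}^{n-1} k! · C(n,k), where C(n,k) is the binomial coefficient (for n = 0 the empty sum is 0). -/
/-! The sum `∑_{k<n} k! C(n,k)` is `∑_{k<n} n(n-1)⋯(n-k+1)`, and peeling off the leading factor
`n` of each falling factorial shows that this sum satisfies the recursion defining `a`. -/

def a : ℕ → ℕ
  | 0 => 0
  | n + 1 => (n + 1) * a n + 1

open Finset

theorem sum_range_succ_descFactorial (n : ℕ) :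
    ∑ k ∈ range (n + 1), (n + 1).descFactorial k =
      (n + 1) * ∑ k ∈ range n, n.descFactorial k + 1 := by
  rw [sum_range_succ', mul_sum]
  simp only [Nat.succ_descFactorial_succ, Nat.descFactorial_zero]

theorem a_eq_sum_descFactorial (n : ℕ) : a n = ∑ k ∈ range n, n.descFactorial k := by
  induction n with
  | zero => rfl
  | succ n ih => rw [a, ih, sum_range_succ_descFactorial]

theorem a_eq_binomial_sum : ∀ n : ℕ,
    a n = ∑ k ∈ Finset.range n, (Nat.factorial k) * Nat.choose n k := by
  intro n
  rw [a_eq_sum_descFactorial]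
  exact sum_congr rfl fun k _ => Nat.descFactorial_eq_factorial_mul_choose n k
end

section
/- For all n ≥ 1, a(n) = ⌊n! · (e - 1)⌋, where e is Euler's number. -/
open Finset

lemma a_real (n : ℕ) :
    (a n : ℝ) = (Nat.factorial n : ℝ) *
      ((∑ i ∈ range (n+1), (1:ℝ) / (Nat.factorial i)) - 1) := by
  induction n with
  | zero => simp [a]
  | succ n ih =>
    rw [Finset.sum_range_succ]
    have hf : (Nat.factorial (n+1) : ℝ) = (n+1) * Nat.factorial n := by
      push_cast [Nat.factorial_succ]; ring
    simp only [a]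
    push_cast [ih, hf]
    have hfn : (Nat.factorial n : ℝ) ≠ 0 := by positivity
    field_simp
    ring

theorem a_eq_floor : ∀ n : ℕ, 1 ≤ n →
    (a n : ℤ) = ⌊((Nat.factorial n) : ℝ) * (Real.exp 1 - 1)⌋ := by
  intro n hn
  symm
  rw [Int.floor_eq_iff]
  have hfn : (0:ℝ) < (Nat.factorial n : ℝ) := by positivity
  set S : ℝ := ∑ i ∈ range (n+1), (1:ℝ) / (Nat.factorial i) with hS
  have hSle : S ≤ Real.exp 1 := by
    have h := Real.sum_le_exp_of_nonneg (zero_le_one) (n+1)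
    simp only [one_pow] at h
    exact h
  have hbound : Real.exp 1 - S ≤ ((n:ℝ) + 2) / ((Nat.factorial (n+1) : ℝ) * (n+1)) := by
    have h := Real.exp_bound (x := 1) (by norm_num) (n := n+1) (Nat.succ_pos n)
    have h' := (abs_sub_le_iff.1 h).1
    simp only [one_pow, abs_one, one_mul] at h'
    have e2 : ((n+1).succ : ℝ) = (n:ℝ) + 2 := by push_cast; ring
    have e3 : ((n+1 : ℕ) : ℝ) = (n:ℝ) + 1 := by push_cast; ring
    rw [e2, e3] at h'
    linarith [h']
  have ha := a_real n
  constructor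
  · push_cast
    rw [ha]
    nlinarith
  · push_cast
    rw [ha]
    have hfact : (Nat.factorial (n+1) : ℝ) = (n+1) * Nat.factorial n := by
      push_cast [Nat.factorial_succ]; ring
    have hkey : (Nat.factorial n : ℝ) * (Real.exp 1 - S) < 1 := by
      have hle : (Nat.factorial n : ℝ) * (Real.exp 1 - S) ≤
          (Nat.factorial n : ℝ) * ((n + 2) / ((Nat.factorial (n+1) : ℝ) * (n+1))) := by
        nlinarith
      have hlt : (Nat.factorial n : ℝ) * ((n + 2) / ((Nat.factorial (n+1) : ℝ) * (n+1))) < 1 := by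
        rw [← mul_div_assoc, div_lt_one (by positivity), hfact]
        have hn' : (1:ℝ) ≤ n := by exact_mod_cast hn
        nlinarith
      linarith
    nlinarith
end

section
/- Define S(m) = ∑_{k=0}^{m} k!·C(m,k). Then for all m ≥ 2, S(m) - (m+1)·S(m-1) + (m-1)·S(m-2) = 0. -/
def S (m : ℕ) : ℕ := ∑ k ∈ Finset.range (m + 1), (Nat.factorial k) * Nat.choose m k

/-! Since `k! * C(m, k)` is the falling factorial `m⁽ᵏ⁾` and `(n+1)⁽ᵏ⁺¹⁾ = (n+1) * n⁽ᵏ⁾`,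
`S` satisfies `S (n + 1) = (n + 1) * S n + 1`; the theorem is the difference of two
consecutive instances of this first-order recurrence. -/

lemma S_eq_sum_descFactorial (m : ℕ) :
    S m = ∑ k ∈ Finset.range (m + 1), m.descFactorial k := by
  simp only [S, Nat.descFactorial_eq_factorial_mul_choose]

lemma S_succ (n : ℕ) : S (n + 1) = (n + 1) * S n + 1 := by
  rw [S_eq_sum_descFactorial, S_eq_sum_descFactorial, Finset.sum_range_succ']
  simp only [Nat.succ_descFactorial_succ, Nat.descFactorial_zero, Finset.mul_sum]

theorem S_recurrence : ∀ m : ℕ, 2 ≤ m →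
    (S m : ℤ) - (m + 1) * S (m - 1) + (m - 1) * S (m - 2) = 0 := by
  rintro m hm
  obtain ⟨n, rfl⟩ : ∃ n, m = n + 2 := ⟨m - 2, by omega⟩
  rw [show n + 2 - 1 = n + 1 from rfl, show n + 2 - 2 = n from rfl, S_succ (n + 1), S_succ n]
  push_cast
  ring
end

section
/- The formal power series ∑_{n≥0} a(n)·x^n/n! over ℚ equals (exp(x) - 1)·(∑_{n≥0} x^n), i.e. (1 - x)·(∑_{n≥0} a(n)·x^n/n!) = exp(x) - 1 as formal power series. -/
theorem egf_identity :
    (1 - PowerSeries.X) * PowerSeries.mk (fun n => (a n : ℚ) / (Nat.factorial n)) =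
      PowerSeries.exp ℚ - 1 := by
  ext n
  rw [sub_mul, one_mul, map_sub, map_sub]
  cases n with
  | zero =>
    simp [a, PowerSeries.exp, PowerSeries.coeff_mk]
  | succ n =>
    rw [PowerSeries.coeff_succ_X_mul]
    simp only [PowerSeries.coeff_mk, PowerSeries.coeff_exp, PowerSeries.coeff_one,
      Nat.succ_ne_zero, if_false]
    rw [a]
    push_cast
    rw [Nat.factorial_succ]
    push_cast
    have h1 : (n.factorial : ℚ) ≠ 0 := by exact_mod_cast n.factorial_pos.ne'
    field_simp
    ring
end
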